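/- Fix f(r)=r and a Riemannian point q₀∈ℝ³ with r₀=√(x₀²+y₀²)>0. Let γ be an arc-length parametrized normal geodesic from q₀ with initial covector λ₀=(u₀,v₀,w₀) on the unit energy shell E₁={λ₀ : u₀²+v₀²+r₀²w₀²=1}. Then the first conjugate time of γ is t_con(γ) = π/|w₀|, with the convention t_con(γ)=+∞ for the straight-line geodesics with w₀=0. -/

import Mathlib

noncomputable section

/-- `γ` is a normal geodesic of the radial Grushin structure with `f(r) = r`,
with initial covector `lam = (u₀,v₀,w₀)`: it is the projection of a solution of the
Hamiltonian system `ẋ=u, ẏ=v, ż=(x²+y²)w₀, u̇=−w₀²x, v̇=−w₀²y`. -/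
def IsGrushinGeodesic (γ : ℝ → ℝ × ℝ × ℝ) (lam : ℝ × ℝ × ℝ) : Prop :=
  ∃ u v : ℝ → ℝ, u 0 = lam.1 ∧ v 0 = lam.2.1 ∧
    (∀ t, HasDerivAt (fun s => (γ s).1) (u t) t) ∧
    (∀ t, HasDerivAt (fun s => (γ s).2.1) (v t) t) ∧
    (∀ t, HasDerivAt (fun s => (γ s).2.2) (((γ t).1 ^ 2 + (γ t).2.1 ^ 2) * lam.2.2) t) ∧
    (∀ t, HasDerivAt u (-(lam.2.2 ^ 2) * (γ t).1) t) ∧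
    (∀ t, HasDerivAt v (-(lam.2.2 ^ 2) * (γ t).2.1) t)

/-!
For `w ≠ 0` the horizontal part of a geodesic solves the harmonic oscillator `ẍ = -w² x`, so the
exponential map factors as `(u, v, w) ↦ (u / w, v / w, w)` followed by an explicit map
`G(p, q, θ)` (the geodesic with `p = u / w`, `q = v / w` at `θ = w t`), whose Jacobian is
`sin θ * (r₀² sin θ + (x₀ p + y₀ q) θ sin θ + (p² + q²) (sin θ - θ cos θ))`.
Along `t • (u₀, v₀, w₀)` we have `θ = t w₀`. For `0 < |θ| < π` the Jacobian is positive by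
Cauchy–Schwarz and `θ² sin θ < 4 (sin θ - θ cos θ)`; at `θ = ±π` it vanishes. For `w₀ = 0`,
continuity of `d Exp` identifies its determinant with the limit `r₀² + x₀ u + y₀ v + (u² + v²) / 3`
of the Jacobian as `w → 0`, which is positive.
-/

open Real Filter Topology

lemma eq_cos_add_sin_of_hasDerivAt {w : ℝ} (hw : w ≠ 0) {x y : ℝ → ℝ}
    (hx : ∀ t, HasDerivAt x (y t) t) (hy : ∀ t, HasDerivAt y (-(w ^ 2) * x t) t) (t : ℝ) :
    x t = x 0 * cos (w * t) + y 0 / w * sin (w * t) := by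
  have hwt : ∀ t, HasDerivAt (fun s => w * s) w t := fun t => by
    simpa using (hasDerivAt_id t).const_mul w
  have hcos : ∀ t, HasDerivAt (fun s => cos (w * s)) (-sin (w * t) * w) t := fun t =>
    (hasDerivAt_cos (w * t)).comp t (hwt t)
  have hsin : ∀ t, HasDerivAt (fun s => sin (w * s)) (cos (w * t) * w) t := fun t =>
    (hasDerivAt_sin (w * t)).comp t (hwt t)
  have hg : ∀ t, HasDerivAt (fun s => x s * cos (w * s) - y s / w * sin (w * s)) 0 t := fun t => by
    refine (((hx t).mul (hcos t)).sub (((hy t).div_const w).mul (hsin t))).congr_deriv ?_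
    field_simp
    ring
  have hh : ∀ t, HasDerivAt (fun s => x s * sin (w * s) + y s / w * cos (w * s)) 0 t := fun t => by
    refine (((hx t).mul (hsin t)).add (((hy t).div_const w).mul (hcos t))).congr_deriv ?_
    field_simp
    ring
  have hg_const := is_const_of_deriv_eq_zero (fun s => (hg s).differentiableAt)
    (fun s => (hg s).deriv) t 0
  have hh_const := is_const_of_deriv_eq_zero (fun s => (hh s).differentiableAt)
    (fun s => (hh s).deriv) t 0
  simp only [mul_zero, cos_zero, sin_zero, mul_one, sub_zero, zero_add] at hg_const hh_const
  linear_combination cos (w * t) * hg_const + sin (w * t) * hh_const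
    - x t * sin_sq_add_cos_sq (w * t)

/-- The geodesic from `(x₀, y₀, z₀)` with covector `(u, v, w)`, `w ≠ 0`, at time `t`, written in
the variables `p = u / w`, `q = v / w`, `θ = w t`. -/
def grushinCurve (x₀ y₀ z₀ p q θ : ℝ) : ℝ × ℝ × ℝ :=
  (x₀ * cos θ + p * sin θ, y₀ * cos θ + q * sin θ,
    z₀ + (x₀ ^ 2 + y₀ ^ 2) / 2 * (θ + sin θ * cos θ) + (x₀ * p + y₀ * q) * sin θ ^ 2
      + (p ^ 2 + q ^ 2) / 2 * (θ - sin θ * cos θ))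

lemma grushinCurve_zero (x₀ y₀ z₀ p q : ℝ) : grushinCurve x₀ y₀ z₀ p q 0 = (x₀, y₀, z₀) := by
  simp [grushinCurve]

lemma hasDerivAt_grushinCurve_snd_snd (x₀ y₀ z₀ p q θ : ℝ) :
    HasDerivAt (fun θ => (grushinCurve x₀ y₀ z₀ p q θ).2.2)
      ((x₀ * cos θ + p * sin θ) ^ 2 + (y₀ * cos θ + q * sin θ) ^ 2) θ := by
  have hs := hasDerivAt_sin θ
  have hc := hasDerivAt_cos θ
  have hθ := hasDerivAt_id θ
  refine ((((hθ.add (hs.mul hc)).const_mul ((x₀ ^ 2 + y₀ ^ 2) / 2)).const_add z₀ |>.add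
      ((hs.pow 2).const_mul (x₀ * p + y₀ * q))).add
    ((hθ.sub (hs.mul hc)).const_mul ((p ^ 2 + q ^ 2) / 2))).congr_deriv ?_
  linear_combination -((x₀ ^ 2 + y₀ ^ 2) + (p ^ 2 + q ^ 2)) / 2 * sin_sq_add_cos_sq θ

lemma hasDerivAt_grushinCurve (x₀ y₀ z₀ p q θ : ℝ) :
    HasDerivAt (grushinCurve x₀ y₀ z₀ p q)
      (-x₀ * sin θ + p * cos θ, -y₀ * sin θ + q * cos θ,
        (x₀ * cos θ + p * sin θ) ^ 2 + (y₀ * cos θ + q * sin θ) ^ 2) θ := by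
  have hs := hasDerivAt_sin θ
  have hc := hasDerivAt_cos θ
  refine HasDerivAt.prodMk ?_ (HasDerivAt.prodMk ?_ (hasDerivAt_grushinCurve_snd_snd ..))
  · exact ((hc.const_mul x₀).add (hs.const_mul p)).congr_deriv (by ring)
  · exact ((hc.const_mul y₀).add (hs.const_mul q)).congr_deriv (by ring)

lemma IsGrushinGeodesic.eq_grushinCurve {γ : ℝ → ℝ × ℝ × ℝ} {u v w : ℝ}
    (hγ : IsGrushinGeodesic γ (u, v, w)) (hw : w ≠ 0) (t : ℝ) :
    γ t = grushinCurve (γ 0).1 (γ 0).2.1 (γ 0).2.2 (u / w) (v / w) (w * t) := by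
  obtain ⟨u', v', hu0, hv0, hx, hy, hz, hu', hv'⟩ := hγ
  have hxt := eq_cos_add_sin_of_hasDerivAt hw hx hu'
  have hyt := eq_cos_add_sin_of_hasDerivAt hw hy hv'
  set Γ := fun s => grushinCurve (γ 0).1 (γ 0).2.1 (γ 0).2.2 (u / w) (v / w) (w * s)
  have hΓ : ∀ s, HasDerivAt (fun s => (Γ s).2.2) (((γ s).1 ^ 2 + (γ s).2.1 ^ 2) * w) s := by
    intro s
    have := (hasDerivAt_grushinCurve_snd_snd (γ 0).1 (γ 0).2.1 (γ 0).2.2 (u / w) (v / w)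
      (w * s)).comp s ((hasDerivAt_id s).const_mul w)
    refine this.congr_deriv ?_
    rw [hxt s, hyt s, hu0, hv0]
    ring
  have hz_const := is_const_of_deriv_eq_zero (f := fun s => (γ s).2.2 - (Γ s).2.2)
    (fun s => ((hz s).sub (hΓ s)).differentiableAt)
    (fun s => ((hz s).sub (hΓ s)).deriv.trans (sub_self _)) t 0
  simp only [Γ, mul_zero, grushinCurve_zero, sub_self] at hz_const
  ext
  · simpa [Γ, grushinCurve, hu0] using hxt t
  · simpa [Γ, grushinCurve, hv0] using hyt t
  · simpa [sub_eq_zero] using hz_const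

def tripleEquivFin3 (R : Type*) [CommRing R] : (R × R × R) ≃ₗ[R] (Fin 3 → R) where
  toFun a := ![a.1, a.2.1, a.2.2]
  invFun f := (f 0, f 1, f 2)
  map_add' a b := by funext i; fin_cases i <;> simp
  map_smul' c a := by funext i; fin_cases i <;> simp
  left_inv a := by simp
  right_inv f := by funext i; fin_cases i <;> simp

lemma LinearMap.det_eq_det_of_columns {R : Type*} [CommRing R]
    (D : (R × R × R) →ₗ[R] (R × R × R)) (D₁ D₂ D₃ : R × R × R)
    (h₁ : D (1, 0, 0) = D₁) (h₂ : D (0, 1, 0) = D₂) (h₃ : D (0, 0, 1) = D₃) :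
    LinearMap.det D =
      !![D₁.1, D₂.1, D₃.1; D₁.2.1, D₂.2.1, D₃.2.1; D₁.2.2, D₂.2.2, D₃.2.2].det := by
  rw [← LinearMap.det_toLin', ← LinearMap.det_conj D (tripleEquivFin3 R)]
  congr 1
  refine LinearMap.pi_ext' fun j => LinearMap.ext_ring ?_
  funext i
  fin_cases j <;> fin_cases i <;>
    simp [h₁, h₂, h₃, tripleEquivFin3, Matrix.toLin'_apply, Matrix.mulVec, dotProduct,
      Fin.sum_univ_three]

lemma det_fderiv_eq_of_hasDerivAt {F : ℝ × ℝ × ℝ → ℝ × ℝ × ℝ} {a b c : ℝ}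
    {F₁ F₂ F₃ : ℝ × ℝ × ℝ} (hF : DifferentiableAt ℝ F (a, b, c))
    (h₁ : HasDerivAt (fun s => F (s, b, c)) F₁ a) (h₂ : HasDerivAt (fun s => F (a, s, c)) F₂ b)
    (h₃ : HasDerivAt (fun s => F (a, b, s)) F₃ c) :
    LinearMap.det (fderiv ℝ F (a, b, c)).toLinearMap =
      !![F₁.1, F₂.1, F₃.1; F₁.2.1, F₂.2.1, F₃.2.1; F₁.2.2, F₂.2.2, F₃.2.2].det := by
  have hid (s : ℝ) := hasDerivAt_id s
  refine LinearMap.det_eq_det_of_columns _ _ _ _ ?_ ?_ ?_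
  · exact (hF.hasFDerivAt.comp_hasDerivAt a
      ((hid a).prodMk ((hasDerivAt_const a b).prodMk (hasDerivAt_const a c)))).unique h₁
  · exact (hF.hasFDerivAt.comp_hasDerivAt b
      ((hasDerivAt_const b a).prodMk ((hid b).prodMk (hasDerivAt_const b c)))).unique h₂
  · exact (hF.hasFDerivAt.comp_hasDerivAt c
      ((hasDerivAt_const c a).prodMk ((hasDerivAt_const c b).prodMk (hid c)))).unique h₃

def grushinJacobian (x₀ y₀ p q θ : ℝ) : ℝ :=
  sin θ * ((x₀ ^ 2 + y₀ ^ 2) * sin θ + (x₀ * p + y₀ * q) * θ * sin θ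
    + (p ^ 2 + q ^ 2) * (sin θ - θ * cos θ))

lemma det_fderiv_grushinCurve (x₀ y₀ z₀ p q θ : ℝ) :
    LinearMap.det (fderiv ℝ (fun a : ℝ × ℝ × ℝ => grushinCurve x₀ y₀ z₀ a.1 a.2.1 a.2.2)
      (p, q, θ)).toLinearMap = grushinJacobian x₀ y₀ p q θ := by
  have hp : HasDerivAt (fun s => grushinCurve x₀ y₀ z₀ s q θ)
      (sin θ, 0, x₀ * sin θ ^ 2 + p * (θ - sin θ * cos θ)) p := by
    have h := hasDerivAt_id p
    have hz : HasDerivAt (fun s => (grushinCurve x₀ y₀ z₀ s q θ).2.2)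
        (x₀ * sin θ ^ 2 + p * (θ - sin θ * cos θ)) p :=
      ((((h.const_mul x₀).add_const _).mul_const _).const_add _).add
        (((h.pow 2).add_const _).div_const 2 |>.mul_const _) |>.congr_deriv (by simp)
    exact (((h.mul_const _).const_add _).congr_deriv (one_mul _)).prodMk
      ((hasDerivAt_const _ _).prodMk hz)
  have hq : HasDerivAt (fun s => grushinCurve x₀ y₀ z₀ p s θ)
      (0, sin θ, y₀ * sin θ ^ 2 + q * (θ - sin θ * cos θ)) q := by
    have h := hasDerivAt_id q
    have hz : HasDerivAt (fun s => (grushinCurve x₀ y₀ z₀ p s θ).2.2)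
        (y₀ * sin θ ^ 2 + q * (θ - sin θ * cos θ)) q :=
      ((((h.const_mul y₀).const_add _).mul_const _).const_add _).add
        (((h.pow 2).const_add _).div_const 2 |>.mul_const _) |>.congr_deriv (by simp)
    exact (hasDerivAt_const _ _).prodMk
      ((((h.mul_const _).const_add _).congr_deriv (one_mul _)).prodMk hz)
  rw [det_fderiv_eq_of_hasDerivAt (by unfold grushinCurve; fun_prop) hp hq
    (hasDerivAt_grushinCurve x₀ y₀ z₀ p q θ), Matrix.det_fin_three]
  simp only [grushinJacobian, Matrix.of_apply, Matrix.cons_val', Matrix.cons_val_zero,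
    Matrix.cons_val_one, Matrix.cons_val_two, Matrix.empty_val', Matrix.cons_val_fin_one,
    Matrix.head_cons, Matrix.tail_cons, Matrix.head_fin_const]
  linear_combination sin θ ^ 2 * ((x₀ ^ 2 + y₀ ^ 2) + (p ^ 2 + q ^ 2)) * sin_sq_add_cos_sq θ

lemma det_fderiv_div_snd_snd {u v w : ℝ} (hw : w ≠ 0) :
    LinearMap.det (fderiv ℝ (fun a : ℝ × ℝ × ℝ => (a.1 / a.2.2, a.2.1 / a.2.2, a.2.2))
      (u, v, w)).toLinearMap = 1 / w ^ 2 := by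
  have hid (s : ℝ) := hasDerivAt_id s
  have hu : HasDerivAt (fun s => (s / w, v / w, w)) (1 / w, 0, 0) u :=
    ((hid u).div_const w).prodMk ((hasDerivAt_const _ _).prodMk (hasDerivAt_const _ _))
  have hv : HasDerivAt (fun s => (u / w, s / w, w)) (0, 1 / w, 0) v :=
    (hasDerivAt_const _ _).prodMk (((hid v).div_const w).prodMk (hasDerivAt_const _ _))
  have hw' : HasDerivAt (fun s => (u / s, v / s, s)) (-u / w ^ 2, -v / w ^ 2, 1) w :=
    (((hasDerivAt_const _ u).div (hid w) hw).prodMk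
      (((hasDerivAt_const _ v).div (hid w) hw).prodMk (hid w))).congr_deriv (by simp)
  rw [det_fderiv_eq_of_hasDerivAt (by fun_prop (disch := assumption)) hu hv hw',
    Matrix.det_fin_three]
  simp only [Matrix.of_apply, Matrix.cons_val', Matrix.cons_val_zero, Matrix.cons_val_one,
    Matrix.cons_val_two, Matrix.empty_val', Matrix.cons_val_fin_one, Matrix.head_cons,
    Matrix.tail_cons, Matrix.head_fin_const]
  field_simp
  ring

lemma add_mul_add_mul_pos {a l m A B : ℝ} (ha : 0 < a) (hl : l ^ 2 ≤ a * m) (hA : 0 < A)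
    (hAB : A < 4 * B) : 0 < a * A + l * A + m * B := by
  have hm : 0 ≤ m := nonneg_of_mul_nonneg_right (by nlinarith [sq_nonneg l]) ha
  rcases hm.eq_or_lt with rfl | hm
  · have hl0 : l = 0 := by nlinarith [sq_nonneg l]
    subst hl0
    nlinarith
  -- `(4a + m)² ≥ 16am ≥ (4l)²`
  have h4 : -(4 * a + m) ≤ 4 * l :=
    (abs_le_of_sq_le_sq' (by nlinarith [sq_nonneg (4 * a - m)]) (by positivity)).1
  nlinarith

lemma sin_sub_mul_cos_pos {θ : ℝ} (hθ : 0 < θ) (hθπ : θ < π) : 0 < sin θ - θ * cos θ := by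
  have hd : ∀ x : ℝ, HasDerivAt (fun y => sin y - y * cos y) (x * sin x) x := fun x =>
    ((hasDerivAt_sin x).sub ((hasDerivAt_id x).mul (hasDerivAt_cos x))).congr_deriv
      (by simp only [id]; ring)
  have hmono : StrictMonoOn (fun y => sin y - y * cos y) (Set.Icc 0 π) := by
    refine strictMonoOn_of_deriv_pos (convex_Icc 0 π) (by fun_prop) fun x hx => ?_
    rw [interior_Icc] at hx
    rw [(hd x).deriv]
    exact mul_pos hx.1 (sin_pos_of_pos_of_lt_pi hx.1 hx.2)
  simpa using hmono (Set.left_mem_Icc.2 pi_pos.le) ⟨hθ.le, hθπ.le⟩ hθ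

lemma sq_mul_sin_lt_four_mul_sin_sub_mul_cos {θ : ℝ} (hθ : 0 < θ) (hθπ : θ < π) :
    θ ^ 2 * sin θ < 4 * (sin θ - θ * cos θ) := by
  have hd : ∀ x : ℝ, HasDerivAt (fun y => 4 * (sin y - y * cos y) - y ^ 2 * sin y)
      (x * (2 * sin x - x * cos x)) x := fun x =>
    ((((hasDerivAt_sin x).sub ((hasDerivAt_id x).mul (hasDerivAt_cos x))).const_mul 4).sub
      (((hasDerivAt_id x).pow 2).mul (hasDerivAt_sin x))).congr_deriv
      (by simp only [id, Pi.pow_apply]; ring)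
  have hmono : StrictMonoOn (fun y => 4 * (sin y - y * cos y) - y ^ 2 * sin y) (Set.Icc 0 π) := by
    refine strictMonoOn_of_deriv_pos (convex_Icc 0 π) (by fun_prop) fun x hx => ?_
    rw [interior_Icc] at hx
    rw [(hd x).deriv]
    have := sin_sub_mul_cos_pos hx.1 hx.2
    have := sin_pos_of_pos_of_lt_pi hx.1 hx.2
    exact mul_pos hx.1 (by linarith)
  simpa using hmono (Set.left_mem_Icc.2 pi_pos.le) ⟨hθ.le, hθπ.le⟩ hθ

lemma grushinJacobian_pos {x₀ y₀ p q θ : ℝ} (hr : 0 < x₀ ^ 2 + y₀ ^ 2) (hθ : 0 < θ)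
    (hθπ : θ < π) : 0 < grushinJacobian x₀ y₀ p q θ := by
  have hsin := sin_pos_of_pos_of_lt_pi hθ hθπ
  have hK : 0 < (x₀ ^ 2 + y₀ ^ 2) * (θ ^ 2 * sin θ) + ((x₀ * p + y₀ * q) * θ) * (θ ^ 2 * sin θ)
      + ((p ^ 2 + q ^ 2) * θ ^ 2) * (sin θ - θ * cos θ) :=
    add_mul_add_mul_pos hr (by nlinarith [sq_nonneg (x₀ * q - y₀ * p), sq_nonneg θ])
      (by positivity) (sq_mul_sin_lt_four_mul_sin_sub_mul_cos hθ hθπ)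
  unfold grushinJacobian
  have : 0 < θ ^ 2 := by positivity
  refine mul_pos hsin (pos_of_mul_pos_right (a := θ ^ 2) ?_ this.le)
  linear_combination hK

lemma grushinJacobian_neg (x₀ y₀ p q θ : ℝ) :
    grushinJacobian x₀ y₀ p q (-θ) = grushinJacobian x₀ y₀ (-p) (-q) θ := by
  simp only [grushinJacobian, sin_neg, cos_neg]
  ring

lemma grushinJacobian_ne_zero {x₀ y₀ p q θ : ℝ} (hr : 0 < x₀ ^ 2 + y₀ ^ 2) (hθ : θ ≠ 0)
    (hθπ : |θ| < π) : grushinJacobian x₀ y₀ p q θ ≠ 0 := by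
  rcases hθ.lt_or_gt with hθ | hθ
  · rw [← neg_neg θ, grushinJacobian_neg]
    exact (grushinJacobian_pos hr (neg_pos.2 hθ) (by rwa [abs_of_neg hθ] at hθπ)).ne'
  · exact (grushinJacobian_pos hr hθ (by rwa [abs_of_pos hθ] at hθπ)).ne'

lemma tendsto_sin_div_self : Tendsto (fun w => sin w / w) (𝓝[≠] 0) (𝓝 1) := by
  refine (sinc_zero ▸ continuous_sinc.continuousAt.tendsto.mono_left nhdsWithin_le_nhds).congr' ?_
  filter_upwards [self_mem_nhdsWithin] with w hw using sinc_of_ne_zero hw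

lemma tendsto_sin_sub_mul_cos_div_pow_three :
    Tendsto (fun w => (sin w - w * cos w) / w ^ 3) (𝓝[≠] 0) (𝓝 (1 / 3)) := by
  refine HasDerivAt.lhopital_zero_nhdsNE (f' := fun w => w * sin w) (g' := fun w => 3 * w ^ 2)
    (Eventually.of_forall fun w => ((hasDerivAt_sin w).sub
      ((hasDerivAt_id w).mul (hasDerivAt_cos w))).congr_deriv (by simp only [id]; ring))
    (Eventually.of_forall fun w => by simpa using hasDerivAt_pow 3 w)
    (eventually_nhdsWithin_of_forall fun w hw => by simpa using hw)
    ((by fun_prop : Continuous fun w => sin w - w * cos w).tendsto' 0 0 (by simp)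
      |>.mono_left nhdsWithin_le_nhds)
    ((by fun_prop : Continuous fun w : ℝ => w ^ 3).tendsto' 0 0 (by simp)
      |>.mono_left nhdsWithin_le_nhds) ?_
  refine (tendsto_sin_div_self.div_const 3).congr' ?_
  filter_upwards [self_mem_nhdsWithin] with w hw
  field_simp [show w ≠ 0 from hw]

section Exp

variable {x₀ y₀ z₀ : ℝ} {E : ℝ × ℝ × ℝ → ℝ × ℝ × ℝ} (hE0 : E 0 = (x₀, y₀, z₀))
  (hgeo : ∀ lam : ℝ × ℝ × ℝ, IsGrushinGeodesic (fun t => E (t • lam)) lam)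
include hE0 hgeo

lemma exp_eq_grushinCurve {u v w : ℝ} (hw : w ≠ 0) :
    E (u, v, w) = grushinCurve x₀ y₀ z₀ (u / w) (v / w) w := by
  simpa [hE0] using (hgeo (u, v, w)).eq_grushinCurve hw 1

lemma det_fderiv_exp {u v w : ℝ} (hw : w ≠ 0) :
    LinearMap.det (fderiv ℝ E (u, v, w)).toLinearMap =
      grushinJacobian x₀ y₀ (u / w) (v / w) w / w ^ 2 := by
  set G := fun a : ℝ × ℝ × ℝ => grushinCurve x₀ y₀ z₀ a.1 a.2.1 a.2.2
  set φ := fun a : ℝ × ℝ × ℝ => (a.1 / a.2.2, a.2.1 / a.2.2, a.2.2)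
  have hEG : E =ᶠ[𝓝 (u, v, w)] G ∘ φ :=
    ((by fun_prop : Continuous fun a : ℝ × ℝ × ℝ => a.2.2).continuousAt.eventually_ne hw).mono
      fun a ha => exp_eq_grushinCurve hE0 hgeo ha
  have hG : DifferentiableAt ℝ G (φ (u, v, w)) := by unfold G grushinCurve; fun_prop
  have hφ : DifferentiableAt ℝ φ (u, v, w) := by fun_prop (disch := assumption)
  rw [hEG.fderiv_eq, fderiv_comp _ hG hφ, ContinuousLinearMap.toLinearMap_comp,
    LinearMap.det_comp, det_fderiv_grushinCurve, det_fderiv_div_snd_snd hw, mul_one_div]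

lemma det_fderiv_exp_of_eq_zero (hsm : ContDiff ℝ 1 E) (u v : ℝ) :
    LinearMap.det (fderiv ℝ E (u, v, 0)).toLinearMap =
      x₀ ^ 2 + y₀ ^ 2 + x₀ * u + y₀ * v + (u ^ 2 + v ^ 2) / 3 := by
  have hcont : Continuous fun w => LinearMap.det (fderiv ℝ E (u, v, w)).toLinearMap :=
    ContinuousLinearMap.continuous_det.comp
      ((hsm.continuous_fderiv one_ne_zero).comp (by fun_prop))
  refine tendsto_nhds_unique (l := 𝓝[≠] (0 : ℝ))
    ((hcont.tendsto 0).mono_left nhdsWithin_le_nhds) ?_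
  have hlim := tendsto_sin_div_self.mul
    ((tendsto_sin_div_self.const_mul (x₀ ^ 2 + y₀ ^ 2 + x₀ * u + y₀ * v)).add
      (tendsto_sin_sub_mul_cos_div_pow_three.const_mul (u ^ 2 + v ^ 2)))
  convert hlim.congr' ?_ using 2
  · ring
  filter_upwards [self_mem_nhdsWithin] with w (hw : w ≠ 0)
  rw [det_fderiv_exp hE0 hgeo hw, grushinJacobian]
  field_simp
  ring

end Exp

theorem grushin_conjugate_time_general
    (x₀ y₀ z₀ : ℝ) (hq : 0 < x₀ ^ 2 + y₀ ^ 2)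
    (E : ℝ × ℝ × ℝ → ℝ × ℝ × ℝ)
    (hsm : ContDiff ℝ 1 E)
    (hE0 : E 0 = (x₀, y₀, z₀))
    (hgeo : ∀ lam : ℝ × ℝ × ℝ, IsGrushinGeodesic (fun t => E (t • lam)) lam)
    (u₀ v₀ w₀ : ℝ) :
    (w₀ ≠ 0 →
      (∀ t ∈ Set.Ioo (0:ℝ) (Real.pi / |w₀|),
        LinearMap.det ((fderiv ℝ E (t • ((u₀, v₀, w₀) : ℝ × ℝ × ℝ))).toLinearMap) ≠ 0) ∧
      LinearMap.det
        ((fderiv ℝ E ((Real.pi / |w₀|) • ((u₀, v₀, w₀) : ℝ × ℝ × ℝ))).toLinearMap) = 0) ∧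
    (w₀ = 0 → ∀ t : ℝ, 0 < t →
      LinearMap.det ((fderiv ℝ E (t • ((u₀, v₀, w₀) : ℝ × ℝ × ℝ))).toLinearMap) ≠ 0) := by
  have hsmul (t : ℝ) : t • ((u₀, v₀, w₀) : ℝ × ℝ × ℝ) = (t * u₀, t * v₀, t * w₀) := rfl
  refine ⟨fun hw => ⟨fun t ht => ?_, ?_⟩, fun hw t _ => ?_⟩
  · have htw : t * w₀ ≠ 0 := mul_ne_zero ht.1.ne' hw
    rw [hsmul, det_fderiv_exp hE0 hgeo htw]
    refine div_ne_zero (grushinJacobian_ne_zero hq htw ?_) (by positivity)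
    rw [abs_mul, abs_of_pos ht.1]
    exact (lt_div_iff₀ (abs_pos.2 hw)).1 ht.2
  · have hπ : π / |w₀| * w₀ ≠ 0 := by positivity
    have hsin : sin (π / |w₀| * w₀) = 0 := by
      rcases abs_choice w₀ with h | h <;> rw [h] <;> field_simp <;> simp
    rw [hsmul, det_fderiv_exp hE0 hgeo hπ, grushinJacobian, hsin, zero_mul, zero_div]
  · subst hw
    rw [hsmul, mul_zero, det_fderiv_exp_of_eq_zero hE0 hgeo hsm]
    nlinarith [sq_nonneg (3 * x₀ + 2 * (t * u₀)), sq_nonneg (3 * y₀ + 2 * (t * v₀))]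

/-- for the radial Grushin structure with `f(r) = r` and a Riemannian
point `q₀`, the first conjugate time of an arc-length parametrized geodesic with
initial covector `(u₀,v₀,w₀)` on the unit energy shell is `π/|w₀|`: the exponential
map `E = Exp_{q₀}` has no critical point at `t·λ₀` for `0 < t < π/|w₀|` and a
critical point at `t = π/|w₀|`; for `w₀ = 0` there is no conjugate time. -/
theorem grushin_conjugate_time
    (x₀ y₀ z₀ : ℝ) (hq : 0 < x₀ ^ 2 + y₀ ^ 2)
    (E : ℝ × ℝ × ℝ → ℝ × ℝ × ℝ)
    (hsm : ContDiff ℝ 1 E)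
    (hE0 : E 0 = (x₀, y₀, z₀))
    (hgeo : ∀ lam : ℝ × ℝ × ℝ, IsGrushinGeodesic (fun t => E (t • lam)) lam)
    (u₀ v₀ w₀ : ℝ)
    (hshell : u₀ ^ 2 + v₀ ^ 2 + (x₀ ^ 2 + y₀ ^ 2) * w₀ ^ 2 = 1) :
    (w₀ ≠ 0 →
      (∀ t ∈ Set.Ioo (0:ℝ) (Real.pi / |w₀|),
        LinearMap.det ((fderiv ℝ E (t • ((u₀, v₀, w₀) : ℝ × ℝ × ℝ))).toLinearMap) ≠ 0) ∧
      LinearMap.det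
        ((fderiv ℝ E ((Real.pi / |w₀|) • ((u₀, v₀, w₀) : ℝ × ℝ × ℝ))).toLinearMap) = 0) ∧
    (w₀ = 0 → ∀ t : ℝ, 0 < t →
      LinearMap.det ((fderiv ℝ E (t • ((u₀, v₀, w₀) : ℝ × ℝ × ℝ))).toLinearMap) ≠ 0) :=
  grushin_conjugate_time_general x₀ y₀ z₀ hq E hsm hE0 hgeo u₀ v₀ w₀

end
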